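/- arXiv:2204.10848 — 4 statements merged into one kernel-verified Lean document; each statement's English description precedes it below -/
import Mathlib

section
/- If the bi-objective geometric-mean MOG is nonzero at x (with both individual gradients nonzero), then −∇F_GM(x) is a common descent direction: ⟨∇F_GM(x), ∇f_i(x)⟩ > 0 for i = 1, 2. -/
/-! With `u = √(‖g₂‖/‖g₁‖) • g₁` and `v = √(‖g₁‖/‖g₂‖) • g₂` both vectors have norm
`√(‖g₁‖‖g₂‖)`, and for vectors of equal norm `2⟪u + v, u⟫ = ‖u + v‖²`. So `u + v` makes a
positive inner product with `u` and with `v`; as `u` and `v` are nonnegative multiples of `g₁`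
and `g₂`, the same holds for `g₁` and `g₂`. -/

open RealInnerProductSpace

section

variable {E : Type*} [NormedAddCommGroup E] [InnerProductSpace ℝ E]

theorem two_mul_inner_add_left_eq_norm_sq_of_norm_eq {u v : E} (h : ‖u‖ = ‖v‖) :
    2 * ⟪u + v, u⟫ = ‖u + v‖ ^ 2 := by
  rw [norm_add_sq_real, inner_add_left, real_inner_self_eq_norm_sq, real_inner_comm, ← h]
  ring

theorem inner_add_left_pos_of_norm_eq {u v : E} (h : ‖u‖ = ‖v‖) (huv : u + v ≠ 0) :
    0 < ⟪u + v, u⟫ := by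
  have := two_mul_inner_add_left_eq_norm_sq_of_norm_eq h
  have : 0 < ‖u + v‖ := norm_pos_iff.mpr huv
  nlinarith

theorem inner_pos_of_inner_smul_right_pos {w x : E} {r : ℝ} (hr : 0 ≤ r)
    (h : 0 < ⟪w, r • x⟫) : 0 < ⟪w, x⟫ := by
  rw [real_inner_smul_right] at h
  exact pos_of_mul_pos_right h hr

theorem norm_sqrt_div_norm_smul (x y : E) : ‖√(‖y‖ / ‖x‖) • x‖ = √(‖x‖ * ‖y‖) := by
  rcases eq_or_ne x 0 with rfl | hx
  · simp
  have hx' : 0 < ‖x‖ := norm_pos_iff.mpr hx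
  rw [norm_smul, Real.norm_of_nonneg (Real.sqrt_nonneg _), ← Real.sqrt_sq hx'.le,
    ← Real.sqrt_mul (by positivity), Real.sqrt_sq hx'.le]
  congr 1
  field_simp

end

theorem mog_gm_common_descent_general (d : ℕ) (g₁ g₂ : EuclideanSpace ℝ (Fin d))
    (hGM : (1/2 : ℝ) • (Real.sqrt (‖g₂‖ / ‖g₁‖) • g₁ + Real.sqrt (‖g₁‖ / ‖g₂‖) • g₂) ≠ 0) :
    (0 : ℝ) < inner ℝ ((1/2 : ℝ) • (Real.sqrt (‖g₂‖ / ‖g₁‖) • g₁ +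
        Real.sqrt (‖g₁‖ / ‖g₂‖) • g₂)) g₁ ∧
    (0 : ℝ) < inner ℝ ((1/2 : ℝ) • (Real.sqrt (‖g₂‖ / ‖g₁‖) • g₁ +
        Real.sqrt (‖g₁‖ / ‖g₂‖) • g₂)) g₂ := by
  set u := √(‖g₂‖ / ‖g₁‖) • g₁
  set v := √(‖g₁‖ / ‖g₂‖) • g₂
  have hnorm : ‖u‖ = ‖v‖ := by
    rw [norm_sqrt_div_norm_smul, norm_sqrt_div_norm_smul, mul_comm]
  have huv : u + v ≠ 0 := fun h ↦ hGM (by rw [h, smul_zero])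
  simp only [real_inner_smul_left]
  constructor
  · exact mul_pos one_half_pos <| inner_pos_of_inner_smul_right_pos (Real.sqrt_nonneg _)
      (inner_add_left_pos_of_norm_eq hnorm huv)
  · rw [add_comm] at huv ⊢
    exact mul_pos one_half_pos <| inner_pos_of_inner_smul_right_pos (Real.sqrt_nonneg _)
      (inner_add_left_pos_of_norm_eq hnorm.symm huv)

/-- If `∇F_GM ≠ 0` (with both gradients nonzero), then `-∇F_GM` is a common
descent direction: `⟨∇F_GM, gᵢ⟩ > 0` for `i = 1, 2`. -/
theorem mog_gm_common_descent (d : ℕ) (g₁ g₂ : EuclideanSpace ℝ (Fin d))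
    (h₁ : g₁ ≠ 0) (h₂ : g₂ ≠ 0)
    (hGM : (1/2 : ℝ) • (Real.sqrt (‖g₂‖ / ‖g₁‖) • g₁ + Real.sqrt (‖g₁‖ / ‖g₂‖) • g₂) ≠ 0) :
    (0 : ℝ) < inner ℝ ((1/2 : ℝ) • (Real.sqrt (‖g₂‖ / ‖g₁‖) • g₁ +
        Real.sqrt (‖g₁‖ / ‖g₂‖) • g₂)) g₁ ∧
    (0 : ℝ) < inner ℝ ((1/2 : ℝ) • (Real.sqrt (‖g₂‖ / ‖g₁‖) • g₁ +
        Real.sqrt (‖g₁‖ / ‖g₂‖) • g₂)) g₂ :=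
  mog_gm_common_descent_general d g₁ g₂ hGM
end

section
/- The map (g₁, g₂) ↦ ∇F_GM(g₁,g₂), extended by 0 when either argument is 0, is continuous on R^d × R^d; in particular ‖∇F_GM(g₁,g₂)‖ ≤ √(‖g₁‖·‖g₂‖) for all g₁, g₂. -/
open scoped RealInnerProductSpace

/-!
Each summand `√(‖g₂‖ / ‖g₁‖) • g₁` of `∇F_GM` has norm exactly `√(‖g₁‖ * ‖g₂‖)`, and with the
junk value `t / 0 = 0` it vanishes as soon as `g₁` or `g₂` does, so the case split in the
definition is vacuous. The bound is then the triangle inequality, and each summand is continuous: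
by composition where `g₁ ≠ 0`, and because its norm `√(‖g₁‖ * ‖g₂‖)` tends to `0` where `g₁ = 0`.
-/

namespace GeomMeanGrad

variable {E : Type*} [NormedAddCommGroup E] [NormedSpace ℝ E]

noncomputable def rescale (x y : E) : E := Real.sqrt (‖y‖ / ‖x‖) • x

/-- The paper's `∇F_GM(g₁, g₂)`. -/
noncomputable def grad (g₁ g₂ : E) : E := (1 / 2 : ℝ) • (rescale g₁ g₂ + rescale g₂ g₁)

lemma _root_.Real.sqrt_div_mul_self {a : ℝ} (b : ℝ) (ha : 0 ≤ a) :
    Real.sqrt (b / a) * a = Real.sqrt (a * b) := by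
  rcases ha.eq_or_lt with rfl | ha
  · simp
  calc Real.sqrt (b / a) * a = Real.sqrt (b / a) * Real.sqrt (a * a) := by
        rw [Real.sqrt_mul_self ha.le]
    _ = Real.sqrt (b / a * (a * a)) := (Real.sqrt_mul' _ (mul_self_nonneg a)).symm
    _ = Real.sqrt (a * b) := by congr 1; field_simp

lemma norm_rescale (x y : E) : ‖rescale x y‖ = Real.sqrt (‖x‖ * ‖y‖) := by
  rw [rescale, norm_smul, Real.norm_of_nonneg (Real.sqrt_nonneg _),
    Real.sqrt_div_mul_self _ (norm_nonneg x)]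

lemma rescale_zero_left (y : E) : rescale 0 y = 0 := smul_zero _

lemma rescale_zero_right (x : E) : rescale x 0 = 0 := by simp [rescale]

lemma continuous_rescale : Continuous fun p : E × E => rescale p.1 p.2 := by
  rw [continuous_iff_continuousAt]
  rintro ⟨a, b⟩
  by_cases ha : a = 0
  · subst ha
    rw [ContinuousAt, rescale_zero_left, tendsto_zero_iff_norm_tendsto_zero]
    simp_rw [norm_rescale]
    have hlim := (continuous_fst.norm.mul continuous_snd.norm).sqrt.tendsto ((0 : E), b)
    simpa using hlim
  · exact ((continuousAt_snd.norm.div continuousAt_fst.norm (norm_ne_zero_iff.mpr ha)).sqrt).smul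
      continuousAt_fst

lemma continuous_grad : Continuous fun p : E × E => grad p.1 p.2 :=
  (continuous_rescale.add (continuous_rescale.comp continuous_swap)).const_smul _

lemma norm_grad_le (g₁ g₂ : E) : ‖grad g₁ g₂‖ ≤ Real.sqrt (‖g₁‖ * ‖g₂‖) := by
  calc ‖grad g₁ g₂‖ ≤ (1 / 2 : ℝ) * (‖rescale g₁ g₂‖ + ‖rescale g₂ g₁‖) := by
        rw [grad, norm_smul, Real.norm_of_nonneg (by norm_num)]
        gcongr
        exact norm_add_le _ _
    _ = Real.sqrt (‖g₁‖ * ‖g₂‖) := by rw [norm_rescale, norm_rescale, mul_comm ‖g₂‖]; ring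

lemma grad_eq_ite (g₁ g₂ : E) [Decidable (g₁ ≠ 0 ∧ g₂ ≠ 0)] :
    grad g₁ g₂ = if g₁ ≠ 0 ∧ g₂ ≠ 0 then
      (1/2 : ℝ) • (Real.sqrt (‖g₂‖ / ‖g₁‖) • g₁ + Real.sqrt (‖g₁‖ / ‖g₂‖) • g₂)
    else 0 := by
  split_ifs with h
  · rfl
  · rcases not_and_or.mp h with h | h <;> rw [not_not] at h <;> subst h <;>
      simp [grad, rescale_zero_left, rescale_zero_right]

end GeomMeanGrad

open scoped Classical in
/-- `∇F_GM`, extended by `0` when either gradient vanishes, is continuous and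
satisfies `‖∇F_GM(g₁,g₂)‖ ≤ √(‖g₁‖·‖g₂‖)`. -/
theorem mog_gm_continuous_and_bounded (d : ℕ)
    (GM : EuclideanSpace ℝ (Fin d) × EuclideanSpace ℝ (Fin d) → EuclideanSpace ℝ (Fin d))
    (hGM : ∀ g₁ g₂ : EuclideanSpace ℝ (Fin d),
      GM (g₁, g₂) = if g₁ ≠ 0 ∧ g₂ ≠ 0 then
        (1/2 : ℝ) • (Real.sqrt (‖g₂‖ / ‖g₁‖) • g₁ + Real.sqrt (‖g₁‖ / ‖g₂‖) • g₂)
      else 0) :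
    Continuous GM ∧
      ∀ g₁ g₂ : EuclideanSpace ℝ (Fin d), ‖GM (g₁, g₂)‖ ≤ Real.sqrt (‖g₁‖ * ‖g₂‖) := by
  have hGM_eq : GM = fun p => GeomMeanGrad.grad p.1 p.2 := by
    funext ⟨g₁, g₂⟩
    exact (hGM g₁ g₂).trans (GeomMeanGrad.grad_eq_ite g₁ g₂).symm
  subst hGM_eq
  exact ⟨GeomMeanGrad.continuous_grad, GeomMeanGrad.norm_grad_le⟩
end

section
/- First-order necessary condition (Fritz-John) for local efficiency in the smooth bi-objective unconstrained case: if x* ∈ R^d is locally efficient for continuously differentiable f₁, f₂, then there exist λ₁, λ₂ ≥ 0 with λ₁ + λ₂ = 1 and λ₁∇f₁(x*) + λ₂∇f₂(x*) = 0. -/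
/-!
If no convex combination of `∇f₁(x*)` and `∇f₂(x*)` vanishes, the segment between them is a
compact convex set missing `0`, so Hahn–Banach separates it from `0`: some direction `v` has
`⟪∇fᵢ(x*), v⟫ < 0` for both `i`. Moving a little from `x*` along `v` then strictly decreases
both objectives, contradicting local efficiency.
-/

open Filter Topology InnerProductSpace

lemma isCompact_segment {E : Type*} [AddCommGroup E] [Module ℝ E] [TopologicalSpace E]
    [ContinuousAdd E] [ContinuousSMul ℝ E] (a b : E) : IsCompact (segment ℝ a b) := by
  rw [segment_eq_image]
  exact isCompact_Icc.image (by fun_prop)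

lemma exists_inner_neg_of_zero_notMem_segment {E : Type*} [NormedAddCommGroup E]
    [InnerProductSpace ℝ E] [CompleteSpace E] {a b : E} (h : (0 : E) ∉ segment ℝ a b) :
    ∃ v : E, ⟪a, v⟫_ℝ < 0 ∧ ⟪b, v⟫_ℝ < 0 := by
  obtain ⟨f, u, hf, hu⟩ :=
    geometric_hahn_banach_closed_point (convex_segment a b) (isCompact_segment a b).isClosed h
  rw [map_zero] at hu
  refine ⟨(toDual ℝ E).symm f, ?_, ?_⟩ <;> rw [real_inner_comm, toDual_symm_apply]
  exacts [(hf a (left_mem_segment ℝ a b)).trans hu, (hf b (right_mem_segment ℝ a b)).trans hu]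

lemma HasDerivAt.eventually_lt_of_neg {φ : ℝ → ℝ} {a x : ℝ} (h : HasDerivAt φ a x)
    (ha : a < 0) : ∀ᶠ t in 𝓝[>] 0, φ (x + t) < φ x := by
  filter_upwards [h.tendsto_slope_zero_right.eventually (gt_mem_nhds ha), self_mem_nhdsWithin]
    with t hslope (ht : 0 < t)
  exact sub_neg.1 (neg_of_mul_neg_right hslope (inv_nonneg.2 ht.le))

lemma HasFDerivAt.eventually_lt_of_neg {E : Type*} [NormedAddCommGroup E] [NormedSpace ℝ E]
    {g : E → ℝ} {g' : E →L[ℝ] ℝ} {x v : E} (hg : HasFDerivAt g g' x) (hv : g' v < 0) :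
    ∀ᶠ t in 𝓝[>] (0 : ℝ), g (x + t • v) < g x := by
  have hline : HasDerivAt (fun t : ℝ => x + t • v) v 0 := by
    simpa using ((hasDerivAt_id (0 : ℝ)).smul_const v).const_add x
  have hcomp : HasDerivAt (fun t : ℝ => g (x + t • v)) (g' v) 0 :=
    hg.comp_hasDerivAt_of_eq 0 hline (by simp)
  simpa using hcomp.eventually_lt_of_neg hv

lemma eventually_norm_smul_le {E : Type*} [NormedAddCommGroup E] [NormedSpace ℝ E] (v : E)
    {ε : ℝ} (hε : 0 < ε) : ∀ᶠ t in 𝓝 (0 : ℝ), ‖t • v‖ ≤ ε := by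
  have : Tendsto (fun t : ℝ => t • v) (𝓝 0) (𝓝 0) := by
    simpa using (tendsto_id (x := 𝓝 (0 : ℝ))).smul_const v
  simpa using this.eventually (Metric.closedBall_mem_nhds 0 hε)

/-- Fritz-John first-order necessary condition: if `x*` is locally efficient for
continuously differentiable `f₁, f₂ : ℝ^d → ℝ`, then there are `λ₁, λ₂ ≥ 0` with
`λ₁ + λ₂ = 1` and `λ₁ ∇f₁(x*) + λ₂ ∇f₂(x*) = 0`. -/
theorem fritz_john_necessary (d : ℕ) (f₁ f₂ : EuclideanSpace ℝ (Fin d) → ℝ)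
    (h₁ : ContDiff ℝ 1 f₁) (h₂ : ContDiff ℝ 1 f₂)
    (xs : EuclideanSpace ℝ (Fin d))
    (hle : ∃ ε > (0 : ℝ), ¬ ∃ y : EuclideanSpace ℝ (Fin d), ‖y - xs‖ ≤ ε ∧
      (f₁ y ≤ f₁ xs ∧ f₂ y ≤ f₂ xs) ∧ (f₁ y < f₁ xs ∨ f₂ y < f₂ xs)) :
    ∃ l₁ l₂ : ℝ, 0 ≤ l₁ ∧ 0 ≤ l₂ ∧ l₁ + l₂ = 1 ∧
      l₁ • gradient f₁ xs + l₂ • gradient f₂ xs = 0 := by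
  obtain ⟨ε, hε, hno⟩ := hle
  by_contra hc
  obtain ⟨v, hv₁, hv₂⟩ := exists_inner_neg_of_zero_notMem_segment
    (a := gradient f₁ xs) (b := gradient f₂ xs) hc
  have hdescent : ∀ g, ContDiff ℝ 1 g → ⟪gradient g xs, v⟫_ℝ < 0 →
      ∀ᶠ t in 𝓝[>] (0 : ℝ), g (xs + t • v) < g xs := fun g hg hv =>
    (hg.differentiable one_ne_zero xs).hasGradientAt.hasFDerivAt.eventually_lt_of_neg
      (by rwa [toDual_apply_apply])
  obtain ⟨t, ht₁, ht₂, htε⟩ := ((hdescent f₁ h₁ hv₁).and ((hdescent f₂ h₂ hv₂).and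
    (nhdsWithin_le_nhds (eventually_norm_smul_le v hε)))).exists
  exact hno ⟨xs + t • v, by simpa using htε, ⟨ht₁.le, ht₂.le⟩, Or.inl ht₁⟩
end

section
/- If both gradients are nonzero at x and there exists no λ ∈ [0,1] with λ∇f₁(x) + (1−λ)∇f₂(x) = 0, then the shortest vector in the convex hull of {∇f₁(x), ∇f₂(x)} is nonzero and its negative is a common descent direction for both objectives, i.e., this shortest vector has positive inner product with both ∇f₁(x) and ∇f₂(x). -/
open scoped RealInnerProductSpace

/-- First-order optimality: if `‖v‖ ≤ ‖v + t • w‖` for all `t ∈ [0,1]`,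
then `0 ≤ ⟪v, w⟫`. -/
lemma inner_nonneg_of_min (d : ℕ) (v w : EuclideanSpace ℝ (Fin d))
    (h : ∀ t ∈ Set.Icc (0 : ℝ) 1, ‖v‖ ≤ ‖v + t • w‖) :
    (0 : ℝ) ≤ ⟪v, w⟫ := by
  by_contra hneg
  push_neg at hneg
  set a : ℝ := ⟪v, w⟫ with ha
  have hB0 : (0:ℝ) ≤ ‖w‖ ^ 2 := by positivity
  set t : ℝ := min 1 (-2 * a / (‖w‖ ^ 2 + 1)) with ht
  have ht0 : 0 < t := by
    apply lt_min one_pos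
    apply div_pos (by linarith) (by linarith)
  have ht1 : t ≤ 1 := min_le_left _ _
  have ht2 : t ≤ -2 * a / (‖w‖ ^ 2 + 1) := min_le_right _ _
  have key := h t ⟨le_of_lt ht0, ht1⟩
  have hsq : ‖v‖ ^ 2 ≤ ‖v + t • w‖ ^ 2 := by
    apply sq_le_sq' _ key
    linarith [norm_nonneg v, norm_nonneg (v + t • w)]
  rw [@norm_add_sq_real, real_inner_smul_right, norm_smul] at hsq
  have hexp : 0 ≤ 2 * (t * a) + (|t| * ‖w‖) ^ 2 := by
    simp only [Real.norm_eq_abs] at hsq; nlinarith [hsq]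
  rw [abs_of_pos ht0] at hexp
  rw [le_div_iff₀ (by linarith : (0:ℝ) < ‖w‖ ^ 2 + 1)] at ht2
  nlinarith [hexp, ht0, hB0, ht2, mul_le_mul_of_nonneg_left ht2 ht0.le, sq_nonneg t]

/-- Fliege–Svaiter steepest-descent property (bi-objective case): the shortest
nonzero vector `v` in the convex hull of the two nonzero gradients satisfies
`⟨v, g₁⟩ > 0` and `⟨v, g₂⟩ > 0`. -/
theorem shortest_convex_combination_common_descent (d : ℕ)
    (g₁ g₂ : EuclideanSpace ℝ (Fin d)) (h₁ : g₁ ≠ 0) (h₂ : g₂ ≠ 0)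
    (l : ℝ) (hl : l ∈ Set.Icc (0 : ℝ) 1)
    (hmin : ∀ μ ∈ Set.Icc (0 : ℝ) 1,
      ‖l • g₁ + (1 - l) • g₂‖ ≤ ‖μ • g₁ + (1 - μ) • g₂‖)
    (v : EuclideanSpace ℝ (Fin d)) (hv : v = l • g₁ + (1 - l) • g₂)
    (hvne : v ≠ 0) :
    (0 : ℝ) < ⟪v, g₁⟫ ∧ (0 : ℝ) < ⟪v, g₂⟫ := by
  obtain ⟨hl0, hl1⟩ := hl
  have hvpos : (0 : ℝ) < ⟪v, v⟫ := mul_pos (norm_pos_iff.mpr hvne) (norm_pos_iff.mpr hvne) |>.trans_eq (real_inner_self_eq_norm_mul_norm v).symm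
  have key : ∀ (g : EuclideanSpace ℝ (Fin d)),
      (∀ t ∈ Set.Icc (0 : ℝ) 1, ‖v‖ ≤ ‖v + t • (g - v)‖) → (0 : ℝ) < ⟪v, g⟫ := by
    intro g hg
    have := inner_nonneg_of_min d v (g - v) hg
    rw [inner_sub_right] at this
    linarith
  constructor
  · apply key
    intro t ⟨ht0, ht1⟩
    have hmem : (1 - t) * l + t ∈ Set.Icc (0 : ℝ) 1 := by
      constructor <;> nlinarith
    have := hmin _ hmem
    have heq : v + t • (g₁ - v) = ((1 - t) * l + t) • g₁ + (1 - ((1 - t) * l + t)) • g₂ := by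
      rw [hv]; module
    rw [heq, hv]
    exact this
  · apply key
    intro t ⟨ht0, ht1⟩
    have hmem : (1 - t) * l ∈ Set.Icc (0 : ℝ) 1 := by
      constructor <;> nlinarith
    have := hmin _ hmem
    have heq : v + t • (g₂ - v) = ((1 - t) * l) • g₁ + (1 - (1 - t) * l) • g₂ := by
      rw [hv]; module
    rw [heq, hv]
    exact this
end
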